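/- Under the hyperplane reset setup, for every x ∈ G̃, every u ∈ ℝᵐ, and every map f₂ : ℝⁿ × ℝᵐ → ℝⁿ, the pullback vector field f_e'(x,u) = (DR̄(x))⁻¹ · f₂(R̄(x), u) satisfies ĝᵀ f_e'(x,u) = r̂ᵀ f₂(R(x), u). In particular, if for all x ∈ G̃ and u ∈ U either ĝᵀ f₁(x,u) > 0 or r̂ᵀ f₂(R(x),u) < 0 (the hybrid transversality condition), then for all x ∈ G̃ and u ∈ U either ∇g_e(x) · f₁(x,u) > 0 or ∇g_e(x) · f_e'(x,u) < 0 (the Filippov transversality condition for the glued piecewise field, whose discontinuity surface is G̃). -/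

import Mathlib

open Set Function
open scoped RealInnerProductSpace

/-!
Write `P = id - ĝ ĝᵀ` for the projection onto the direction space of `G̃`. At a point `x ∈ G̃`
the extension `R̄` has derivative `A = DR(x) P + r̂ ĝᵀ`. Since `R` maps `G̃` into `R̃`, `DR(x)`
maps `ĝ^⊥` into `r̂^⊥`, so `r̂ᵀ A = ĝᵀ`: the normal component is carried over exactly. The same
identity, together with injectivity of `DR(x)`, shows that `A` is injective, hence invertible,
and then `ĝᵀ A⁻¹ v = r̂ᵀ A A⁻¹ v = r̂ᵀ v`. The Filippov condition is the hybrid one rewritten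
with this identity.
-/

theorem injective_fderiv_of_leftInverse {𝕜 E F : Type*} [NontriviallyNormedField 𝕜]
    [NormedAddCommGroup E] [NormedSpace 𝕜 E] [NormedAddCommGroup F] [NormedSpace 𝕜 F]
    {R : E → F} {Rinv : F → E} {x : E}
    (hleft : LeftInverse Rinv R) (hR : DifferentiableAt 𝕜 R x)
    (hRinv : DifferentiableAt 𝕜 Rinv (R x)) : Injective (fderiv 𝕜 R x) := by
  have hcomp : fderiv 𝕜 Rinv (R x) ∘L fderiv 𝕜 R x = .id 𝕜 E := by
    rw [← fderiv_comp x hRinv hR, hleft.comp_eq_id, fderiv_id]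
  exact LeftInverse.injective fun v => congrArg (· v) hcomp

theorem ContinuousLinearMap.isInvertible_of_injective {K V : Type*} [NontriviallyNormedField K]
    [CompleteSpace K] [NormedAddCommGroup V] [NormedSpace K V] [FiniteDimensional K V]
    {A : V →L[K] V} (hA : Injective A) : A.IsInvertible :=
  ⟨(LinearEquiv.ofInjectiveEndo (A : V →ₗ[K] V) hA).toContinuousLinearEquiv, rfl⟩

variable {E : Type*} [NormedAddCommGroup E] [InnerProductSpace ℝ E]

theorem inner_fderiv_eq_zero_of_mapsTo {g r : E} {c d : ℝ} {R : E → E} {x t : E}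
    (hmaps : MapsTo R {z | ⟪g, z⟫ - c = 0} {y | ⟪r, y⟫ - d = 0}) (hR : DifferentiableAt ℝ R x)
    (hx : ⟪g, x⟫ - c = 0) (ht : ⟪g, t⟫ = 0) : ⟪r, fderiv ℝ R x t⟫ = 0 := by
  have hline : HasDerivAt (fun s : ℝ => x + s • t) t 0 := by
    simpa using ((hasDerivAt_id (0 : ℝ)).smul_const t).const_add x
  have hR0 : HasFDerivAt R (fderiv ℝ R x) (x + (0 : ℝ) • t) := by simpa using hR.hasFDerivAt
  have hder : HasDerivAt (fun s : ℝ => ⟪r, R (x + s • t)⟫) ⟪r, fderiv ℝ R x t⟫ 0 :=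
    (innerSL ℝ r).hasFDerivAt.comp_hasDerivAt 0 (hR0.comp_hasDerivAt 0 hline)
  have hconst : (fun s : ℝ => ⟪r, R (x + s • t)⟫) = fun _ => d := by
    funext s
    have hmem : ⟪g, x + s • t⟫ - c = 0 := by
      rw [inner_add_right, real_inner_smul_right, ht]; linarith
    linarith [show ⟪r, R (x + s • t)⟫ - d = 0 from hmaps hmem]
  rw [hconst] at hder
  exact hder.unique (hasDerivAt_const 0 d)

-- The paper's `R̄`.
noncomputable def resetExtensionDeriv (g r : E) (L : E →L[ℝ] E) : E →L[ℝ] E :=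
  L ∘L (.id ℝ E - (innerSL ℝ g).smulRight g) + (innerSL ℝ g).smulRight r

theorem resetExtensionDeriv_apply (g r : E) (L : E →L[ℝ] E) (w : E) :
    resetExtensionDeriv g r L w = L (w - ⟪g, w⟫ • g) + ⟪g, w⟫ • r :=
  rfl

section UnitNormals

variable {g r : E} {L : E →L[ℝ] E}

theorem inner_resetExtensionDeriv (hg : ‖g‖ = 1) (hr : ‖r‖ = 1)
    (htan : ∀ t, ⟪g, t⟫ = 0 → ⟪r, L t⟫ = 0) (w : E) :
    ⟪r, resetExtensionDeriv g r L w⟫ = ⟪g, w⟫ := by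
  have hproj : ⟪g, w - ⟪g, w⟫ • g⟫ = 0 := by
    rw [inner_sub_right, real_inner_smul_right, real_inner_self_eq_norm_sq, hg]; ring
  rw [resetExtensionDeriv_apply, inner_add_right, htan _ hproj, real_inner_smul_right,
    real_inner_self_eq_norm_sq, hr]
  ring

theorem injective_resetExtensionDeriv (hg : ‖g‖ = 1) (hr : ‖r‖ = 1)
    (htan : ∀ t, ⟪g, t⟫ = 0 → ⟪r, L t⟫ = 0) (hL : Injective L) :
    Injective (resetExtensionDeriv g r L) := by
  refine (injective_iff_map_eq_zero _).2 fun w hw => ?_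
  have hgw : ⟪g, w⟫ = 0 := by
    rw [← inner_resetExtensionDeriv hg hr htan, hw, inner_zero_right]
  simp only [resetExtensionDeriv_apply, hgw, zero_smul, sub_zero, add_zero] at hw
  exact hL (hw.trans L.map_zero.symm)

theorem inner_inverse_resetExtensionDeriv [FiniteDimensional ℝ E] (hg : ‖g‖ = 1)
    (hr : ‖r‖ = 1) (htan : ∀ t, ⟪g, t⟫ = 0 → ⟪r, L t⟫ = 0) (hL : Injective L) (v : E) :
    ⟪g, (resetExtensionDeriv g r L).inverse v⟫ = ⟪r, v⟫ := by
  have hinv := ContinuousLinearMap.isInvertible_of_injective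
    (injective_resetExtensionDeriv hg hr htan hL)
  rw [← inner_resetExtensionDeriv hg hr htan, hinv.self_apply_inverse]

end UnitNormals

-- The paper's `R̄`.
noncomputable def resetExtension (g r : E) (c : ℝ) (R : E → E) (z : E) : E :=
  R (z - (⟪g, z⟫ - c) • g) + (⟪g, z⟫ - c) • r

section Extension

variable {g r : E} {c : ℝ} {R : E → E} {x : E}

theorem resetExtension_of_mem (hx : ⟪g, x⟫ - c = 0) : resetExtension g r c R x = R x := by
  simp [resetExtension, hx]

theorem hasFDerivAt_resetExtension (hx : ⟪g, x⟫ - c = 0) (hR : DifferentiableAt ℝ R x) :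
    HasFDerivAt (resetExtension g r c R) (resetExtensionDeriv g r (fderiv ℝ R x)) x := by
  have hlevel : HasFDerivAt (fun z : E => ⟪g, z⟫ - c) (innerSL ℝ g) x :=
    (innerSL ℝ g).hasFDerivAt.sub_const c
  have hR' : HasFDerivAt R (fderiv ℝ R x) (x - (⟪g, x⟫ - c) • g) := by
    simpa [hx] using hR.hasFDerivAt
  exact (hR'.comp x ((hasFDerivAt_id x).sub (hlevel.smul_const g))).add (hlevel.smul_const r)

theorem inner_inverse_fderiv_resetExtension [FiniteDimensional ℝ E] {d : ℝ} {Rinv : E → E}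
    (hg : ‖g‖ = 1) (hr : ‖r‖ = 1) (hmaps : MapsTo R {z | ⟪g, z⟫ - c = 0} {y | ⟪r, y⟫ - d = 0})
    (hleft : LeftInverse Rinv R) (hR : DifferentiableAt ℝ R x)
    (hRinv : DifferentiableAt ℝ Rinv (R x)) (hx : ⟪g, x⟫ - c = 0) (v : E) :
    ⟪g, (fderiv ℝ (resetExtension g r c R) x).inverse v⟫ = ⟪r, v⟫ := by
  rw [(hasFDerivAt_resetExtension hx hR).fderiv]
  exact inner_inverse_resetExtensionDeriv hg hr
    (fun _ ht => inner_fderiv_eq_zero_of_mapsTo hmaps hR hx ht)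
    (injective_fderiv_of_leftInverse hleft hR hRinv) v

end Extension

theorem pullback_transversality_general {n m : ℕ}
    (ghat rhat : EuclideanSpace ℝ (Fin n)) (hg : ‖ghat‖ = 1) (hr : ‖rhat‖ = 1) (c d : ℝ)
    (R Rinv : EuclideanSpace ℝ (Fin n) → EuclideanSpace ℝ (Fin n))
    (hR : ContDiff ℝ (⊤:ℕ∞) R) (hRinv : ContDiff ℝ (⊤:ℕ∞) Rinv)
    (hleft : Function.LeftInverse Rinv R)
    (hguard : R '' {x | ⟪ghat, x⟫ - c = 0} = {y | ⟪rhat, y⟫ - d = 0}) :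
    (∀ f₂ : EuclideanSpace ℝ (Fin n) → EuclideanSpace ℝ (Fin m) → EuclideanSpace ℝ (Fin n),
      ∀ x : EuclideanSpace ℝ (Fin n), ⟪ghat, x⟫ - c = 0 →
      ∀ u : EuclideanSpace ℝ (Fin m),
        ⟪ghat, (fderiv ℝ (fun z : EuclideanSpace ℝ (Fin n) =>
            R (z - (⟪ghat, z⟫ - c) • ghat) + (⟪ghat, z⟫ - c) • rhat) x).inverse
          (f₂ (R (x - (⟪ghat, x⟫ - c) • ghat) + (⟪ghat, x⟫ - c) • rhat) u)⟫
          = ⟪rhat, f₂ (R x) u⟫) ∧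
    (∀ f₁ f₂ : EuclideanSpace ℝ (Fin n) → EuclideanSpace ℝ (Fin m) → EuclideanSpace ℝ (Fin n),
      ∀ U : Set (EuclideanSpace ℝ (Fin m)), IsCompact U →
      (∀ x : EuclideanSpace ℝ (Fin n), ⟪ghat, x⟫ - c = 0 → ∀ u ∈ U,
        0 < ⟪ghat, f₁ x u⟫ ∨ ⟪rhat, f₂ (R x) u⟫ < 0) →
      ∀ x : EuclideanSpace ℝ (Fin n), ⟪ghat, x⟫ - c = 0 → ∀ u ∈ U,
        0 < ⟪ghat, f₁ x u⟫ ∨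
        ⟪ghat, (fderiv ℝ (fun z : EuclideanSpace ℝ (Fin n) =>
            R (z - (⟪ghat, z⟫ - c) • ghat) + (⟪ghat, z⟫ - c) • rhat) x).inverse
          (f₂ (R (x - (⟪ghat, x⟫ - c) • ghat) + (⟪ghat, x⟫ - c) • rhat) u)⟫ < 0) := by
  have pullback : ∀ f₂ : EuclideanSpace ℝ (Fin n) → EuclideanSpace ℝ (Fin m) →
      EuclideanSpace ℝ (Fin n), ∀ x, ⟪ghat, x⟫ - c = 0 → ∀ u,
      ⟪ghat, (fderiv ℝ (resetExtension ghat rhat c R) x).inverse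
        (f₂ (resetExtension ghat rhat c R x) u)⟫ = ⟪rhat, f₂ (R x) u⟫ := by
    intro f₂ x hx u
    rw [resetExtension_of_mem hx]
    exact inner_inverse_fderiv_resetExtension hg hr (hguard ▸ mapsTo_image R _) hleft
      (hR.differentiable (by simp) x) (hRinv.differentiable (by simp) _) hx _
  exact ⟨pullback, fun f₁ f₂ U _ htrans x hx u hu =>
    (htrans x hx u hu).imp_right (pullback f₂ x hx u).trans_lt⟩

/-- Under the hyperplane reset setup, for `x ∈ G̃` the pullback vector field
`f_e'(x,u) = (DR̄(x))⁻¹ f₂(R̄(x),u)` satisfies `ĝᵀ f_e'(x,u) = r̂ᵀ f₂(R(x),u)`; in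
particular the hybrid transversality condition implies the Filippov transversality
condition for the glued piecewise field. -/
theorem pullback_transversality {n m : ℕ}
    (ghat rhat : EuclideanSpace ℝ (Fin n)) (hg : ‖ghat‖ = 1) (hr : ‖rhat‖ = 1) (c d : ℝ)
    (R Rinv : EuclideanSpace ℝ (Fin n) → EuclideanSpace ℝ (Fin n))
    (hR : ContDiff ℝ (⊤:ℕ∞) R) (hRinv : ContDiff ℝ (⊤:ℕ∞) Rinv)
    (hleft : Function.LeftInverse Rinv R) (hright : Function.RightInverse Rinv R)
    (hguard : R '' {x | ⟪ghat, x⟫ - c = 0} = {y | ⟪rhat, y⟫ - d = 0}) :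
    (∀ f₂ : EuclideanSpace ℝ (Fin n) → EuclideanSpace ℝ (Fin m) → EuclideanSpace ℝ (Fin n),
      ∀ x : EuclideanSpace ℝ (Fin n), ⟪ghat, x⟫ - c = 0 →
      ∀ u : EuclideanSpace ℝ (Fin m),
        ⟪ghat, (fderiv ℝ (fun z : EuclideanSpace ℝ (Fin n) =>
            R (z - (⟪ghat, z⟫ - c) • ghat) + (⟪ghat, z⟫ - c) • rhat) x).inverse
          (f₂ (R (x - (⟪ghat, x⟫ - c) • ghat) + (⟪ghat, x⟫ - c) • rhat) u)⟫
          = ⟪rhat, f₂ (R x) u⟫) ∧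
    (∀ f₁ f₂ : EuclideanSpace ℝ (Fin n) → EuclideanSpace ℝ (Fin m) → EuclideanSpace ℝ (Fin n),
      ∀ U : Set (EuclideanSpace ℝ (Fin m)), IsCompact U →
      (∀ x : EuclideanSpace ℝ (Fin n), ⟪ghat, x⟫ - c = 0 → ∀ u ∈ U,
        0 < ⟪ghat, f₁ x u⟫ ∨ ⟪rhat, f₂ (R x) u⟫ < 0) →
      ∀ x : EuclideanSpace ℝ (Fin n), ⟪ghat, x⟫ - c = 0 → ∀ u ∈ U,
        0 < ⟪ghat, f₁ x u⟫ ∨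
        ⟪ghat, (fderiv ℝ (fun z : EuclideanSpace ℝ (Fin n) =>
            R (z - (⟪ghat, z⟫ - c) • ghat) + (⟪ghat, z⟫ - c) • rhat) x).inverse
          (f₂ (R (x - (⟪ghat, x⟫ - c) • ghat) + (⟪ghat, x⟫ - c) • rhat) u)⟫ < 0) :=
  pullback_transversality_general ghat rhat hg hr c d R Rinv hR hRinv hleft hguard
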